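/- arXiv:1912.06989 — 3 statements merged into one kernel-verified Lean document; each statement's English description precedes it below -/
import Mathlib

section
/- Let φ : ℝ^m → ℝ^l be a q-order polynomial feature map, that is, each coordinate of φ(x) equals c_μ x_1^{μ_1}···x_m^{μ_m} for some nonzero constant c_μ and multi-index μ with |μ| ≤ q (one coordinate per multi-index, l = C(m+q, q)). Suppose X ∈ ℝ^{m×n} has columns x_j = f(z_j), where f : ℝ^d → ℝ^m is a polynomial map of degree at most α and z_j ∈ ℝ^d. Then rank(φ(X)) ≤ min{C(d+αq, αq), C(m+q, q), n}, where φ(X) is the l×n matrix with j-th column φ(x_j). -/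
/-!
Every entry of `φX` is `φ_i(f(z_j)) = c_i ∏_k f_k(z_j)^{ν_i k}`, the value at `z_j` of a polynomial
`P_i` in `d` variables of total degree at most `αq`. Expanding `P_i` in monomials factors `φX` as
(coefficients of the `P_i`) × (monomials evaluated at the `z_j`), whose inner dimension is the
number `C(d + αq, αq)` of monomials of degree at most `αq`. The other two bounds are the matrix
dimensions.
-/

/-- A `q`-order polynomial feature map on `ℝ^m`: coordinates are indexed by (a type in
bijection with) the multi-indices `ν` with `|ν| ≤ q`, and the coordinate for `ν` is
`c · x^ν` with a nonzero constant `c`. -/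
def IsPolyFeatureMap {m : ℕ} {ι : Type} (q : ℕ) (φ : (Fin m → ℝ) → ι → ℝ) : Prop :=
  ∃ e : ι ≃ {ν : Fin m →₀ ℕ // ν.sum (fun _ t => t) ≤ q}, ∃ c : ι → ℝ,
    (∀ i, c i ≠ 0) ∧
    ∀ x i, φ x i = c i * ((e i : Fin m →₀ ℕ).prod fun k t => x k ^ t)

open Finset MvPolynomial

/-- Multi-indices in `d` variables of total degree at most `N`, obtained by dropping the slack
coordinate of those in `d + 1` variables of total degree exactly `N`. -/
noncomputable def Finsupp.multiIndicesDegreeLE (d N : ℕ) : Finset (Fin d →₀ ℕ) :=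
  ((univ : Finset (Fin (d + 1))).finsuppAntidiag N).image
    fun σ => Finsupp.equivFunOnFinite.symm fun i => σ i.castSucc

namespace Finsupp

theorem card_multiIndicesDegreeLE_le (d N : ℕ) :
    #(multiIndicesDegreeLE d N) ≤ (d + N).choose N := by
  classical
  calc #(multiIndicesDegreeLE d N) ≤ #((univ : Finset (Fin (d + 1))).finsuppAntidiag N) :=
        card_image_le
    _ = (d + N).choose N := by
        rw [card_finsuppAntidiag_nat_eq_choose, card_univ, Fintype.card_fin, add_right_comm,
          Nat.add_sub_cancel]

theorem mem_multiIndicesDegreeLE {d N : ℕ} {σ : Fin d →₀ ℕ} (hσ : (σ.sum fun _ t => t) ≤ N) :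
    σ ∈ multiIndicesDegreeLE d N := by
  classical
  refine mem_image.mpr ⟨equivFunOnFinite.symm (Fin.snoc σ (N - σ.sum fun _ t => t)), ?_, ?_⟩
  · rw [mem_finsuppAntidiag]
    refine ⟨?_, subset_univ _⟩
    rw [Fin.sum_univ_castSucc]
    simp only [coe_equivFunOnFinite_symm, Fin.snoc_castSucc, Fin.snoc_last]
    rw [← Finsupp.sum_fintype σ (fun _ t => t) (fun _ => rfl)]
    omega
  · ext i
    simp

end Finsupp

namespace MvPolynomial

theorem totalDegree_finsuppProd_pow_le {σ τ R : Type*} [CommSemiring R]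
    {p : τ → MvPolynomial σ R} {α : ℕ} (hp : ∀ k, (p k).totalDegree ≤ α) (ν : τ →₀ ℕ) :
    (ν.prod fun k t => p k ^ t).totalDegree ≤ α * ν.sum fun _ t => t :=
  calc (ν.prod fun k t => p k ^ t).totalDegree
      ≤ ∑ k ∈ ν.support, (p k ^ ν k).totalDegree := totalDegree_finsetProd _ _
    _ ≤ ∑ k ∈ ν.support, α * ν k :=
        sum_le_sum fun k _ => (totalDegree_pow _ _).trans (by rw [mul_comm]; gcongr; exact hp k)
    _ = α * ν.sum fun _ t => t := (mul_sum _ _ _).symm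

theorem eval_eq_sum_multiIndicesDegreeLE {K : Type*} [CommSemiring K] {d N : ℕ}
    {p : MvPolynomial (Fin d) K} (hp : p.totalDegree ≤ N) (x : Fin d → K) :
    eval x p = ∑ σ ∈ Finsupp.multiIndicesDegreeLE d N, p.coeff σ * ∏ k, x k ^ σ k := by
  rw [eval_eq']
  refine sum_subset (fun σ hσ => Finsupp.mem_multiIndicesDegreeLE ((le_totalDegree hσ).trans hp))
    fun σ _ hσ => ?_
  rw [notMem_support_iff.mp hσ, zero_mul]

end MvPolynomial

theorem Matrix.rank_of_eval_le_choose {K ι κ : Type*} [Field K] [Fintype κ] {d N : ℕ}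
    (P : ι → MvPolynomial (Fin d) K) (hP : ∀ i, (P i).totalDegree ≤ N) (z : κ → Fin d → K) :
    (Matrix.of fun i j => eval (z j) (P i)).rank ≤ (d + N).choose N := by
  let s := Finsupp.multiIndicesDegreeLE d N
  let A : Matrix ι s K := .of fun i σ => (P i).coeff σ
  let B : Matrix s κ K := .of fun σ j => ∏ k, z j k ^ (σ : Fin d →₀ ℕ) k
  have hAB : (Matrix.of fun i j => eval (z j) (P i)) = A * B := by
    ext i j
    rw [of_apply, eval_eq_sum_multiIndicesDegreeLE (hP i), mul_apply, ← sum_coe_sort s]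
    rfl
  calc (Matrix.of fun i j => eval (z j) (P i)).rank = (A * B).rank := by rw [hAB]
    _ ≤ B.rank := rank_mul_le_right A B
    _ ≤ Fintype.card s := rank_le_card_height B
    _ ≤ (d + N).choose N := (Fintype.card_coe s).trans_le (Finsupp.card_multiIndicesDegreeLE_le d N)

theorem stmt1_general (d α m n q : ℕ)
    (ι : Type) [Fintype ι]
    (φ : (Fin m → ℝ) → ι → ℝ) (hφ : IsPolyFeatureMap q φ)
    (hcard : Fintype.card ι = (m + q).choose q)
    (f : (Fin d → ℝ) → (Fin m → ℝ))
    (hf : ∀ i : Fin m, ∃ p : MvPolynomial (Fin d) ℝ,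
      p.totalDegree ≤ α ∧ ∀ z, f z i = MvPolynomial.eval z p)
    (z : Fin n → (Fin d → ℝ))
    (X : Matrix (Fin m) (Fin n) ℝ)
    (hX : ∀ i j, X i j = f (z j) i)
    (φX : Matrix ι (Fin n) ℝ)
    (hφX : ∀ i j, φX i j = φ (fun t => X t j) i) :
    φX.rank ≤ min ((d + α * q).choose (α * q)) (min ((m + q).choose q) n) := by
  obtain ⟨e, c, -, hφe⟩ := hφ
  choose p hp_deg hp_eval using hf
  let P : ι → MvPolynomial (Fin d) ℝ := fun i =>
    C (c i) * (e i : Fin m →₀ ℕ).prod fun k t => p k ^ t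
  have hP_deg : ∀ i, (P i).totalDegree ≤ α * q := fun i =>
    calc (P i).totalDegree ≤ α * (e i : Fin m →₀ ℕ).sum fun _ t => t := by
          refine (totalDegree_mul _ _).trans ?_
          rw [totalDegree_C, zero_add]
          exact totalDegree_finsuppProd_pow_le hp_deg _
      _ ≤ α * q := Nat.mul_le_mul_left α (e i).2
  have hφX_eval : φX = Matrix.of fun i j => eval (z j) (P i) := by
    ext i j
    simp only [hφX, hφe, hX, hp_eval, P, Matrix.of_apply, map_mul, eval_C, map_finsuppProd, map_pow]
  refine le_min ?_ (le_min ?_ ?_)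
  · exact hφX_eval ▸ Matrix.rank_of_eval_le_choose P hP_deg z
  · exact hcard ▸ φX.rank_le_card_height
  · simpa using φX.rank_le_card_width

/-- If `X` has columns `f(z_j)` with `f` a polynomial map of degree ≤ α and
`φ` is a `q`-order polynomial feature map (so `l = C(m+q,q)`), then
`rank φ(X) ≤ min (C(d+αq, αq)) (min (C(m+q,q)) n)`. -/
theorem stmt1 (d α m n q : ℕ) (hd : 0 < d) (hα : 0 < α) (hq : 0 < q)
    (ι : Type) [Fintype ι] [DecidableEq ι]
    (φ : (Fin m → ℝ) → ι → ℝ) (hφ : IsPolyFeatureMap q φ)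
    (hcard : Fintype.card ι = (m + q).choose q)
    (f : (Fin d → ℝ) → (Fin m → ℝ))
    (hf : ∀ i : Fin m, ∃ p : MvPolynomial (Fin d) ℝ,
      p.totalDegree ≤ α ∧ ∀ z, f z i = MvPolynomial.eval z p)
    (z : Fin n → (Fin d → ℝ))
    (X : Matrix (Fin m) (Fin n) ℝ)
    (hX : ∀ i j, X i j = f (z j) i)
    (φX : Matrix ι (Fin n) ℝ)
    (hφX : ∀ i j, φX i j = φ (fun t => X t j) i) :
    φX.rank ≤ min ((d + α * q).choose (α * q)) (min ((m + q).choose q) n) :=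
  stmt1_general d α m n q ι φ hφ hcard f hf z X hX φX hφX
end

section
/- Let q and d̃ be positive integers and define r̃ := min{o ∈ ℕ : C(o+q, q) ≥ d̃}. Then (q! · d̃)^{1/q} − q ≤ r̃ ≤ (q! · d̃)^{1/q}. -/
/-!
For `x := (q! d̃)^{1/q}` we have `x^q = q! d̃`, and the bounds
`(o+1)^q ≤ q! C(o+q,q) ≤ (o+q)^q` show that `⌊x⌋` lies in the set whose minimum is `r̃`
(whence `r̃ ≤ x`), while every member `o` of that set satisfies `x ≤ o + q` (whence `x - q ≤ r̃`).
-/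

open Nat

variable {α : Type*} [Field α] [LinearOrder α] [IsStrictOrderedRing α]

theorem Nat.add_one_pow_div_factorial_le_choose_add (o q : ℕ) :
    ((o + 1) ^ q : α) / q ! ≤ (o + q).choose q := by
  have h := pow_le_choose (α := α) q (o + q)
  rwa [show o + q + 1 - q = o + 1 by omega, Nat.cast_add_one] at h

theorem le_add_of_le_choose_add {q dt o : ℕ} (hq : 0 < q) {x : α} (hx : 0 ≤ x)
    (hxq : x ^ q = q ! * dt) (h : dt ≤ (o + q).choose q) : x ≤ o + q := by
  have hq! : (0 : α) < q ! := mod_cast q.factorial_pos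
  refine (pow_le_pow_iff_left₀ hx (by positivity) hq.ne').1 ?_
  calc x ^ q = q ! * dt := hxq
    _ ≤ q ! * (o + q).choose q := by gcongr
    _ ≤ ((o + q : ℕ) : α) ^ q := (le_div_iff₀' hq!).1 (choose_le_pow_div q (o + q))
    _ = (o + q) ^ q := by norm_cast

theorem le_choose_floor_add [FloorSemiring α] {q dt : ℕ} {x : α} (hx : 0 ≤ x)
    (hxq : x ^ q = q ! * dt) : dt ≤ (⌊x⌋₊ + q).choose q := by
  have hq! : (0 : α) < q ! := mod_cast q.factorial_pos
  suffices (dt : α) ≤ (⌊x⌋₊ + q).choose q by exact_mod_cast this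
  calc (dt : α) = x ^ q / q ! := by rw [hxq, mul_div_cancel_left₀ _ hq!.ne']
    _ ≤ ((⌊x⌋₊ : α) + 1) ^ q / q ! := by gcongr; exact (Nat.lt_floor_add_one x).le
    _ ≤ (⌊x⌋₊ + q).choose q := add_one_pow_div_factorial_le_choose_add _ _

theorem stmt2_general (q dt : ℕ) (hq : 0 < q)
    (rt : ℕ) (hrt : rt = sInf {o : ℕ | dt ≤ (o + q).choose q}) :
    ((q.factorial * dt : ℝ) ^ ((1 : ℝ) / q) - q ≤ (rt : ℝ)) ∧
      ((rt : ℝ) ≤ (q.factorial * dt : ℝ) ^ ((1 : ℝ) / q)) := by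
  set x : ℝ := (q.factorial * dt : ℝ) ^ ((1 : ℝ) / q) with hx_def
  have hx : 0 ≤ x := by positivity
  have hxq : x ^ q = q ! * dt := by
    rw [hx_def, one_div]; exact Real.rpow_inv_natCast_pow (by positivity) hq.ne'
  have hfloor_mem : ⌊x⌋₊ ∈ {o : ℕ | dt ≤ (o + q).choose q} := le_choose_floor_add hx hxq
  have hrt_mem : dt ≤ (rt + q).choose q := hrt ▸ Nat.sInf_mem ⟨_, hfloor_mem⟩
  constructor
  · linarith [le_add_of_le_choose_add hq hx hxq hrt_mem]
  · calc (rt : ℝ) ≤ ⌊x⌋₊ := mod_cast hrt ▸ Nat.sInf_le hfloor_mem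
      _ ≤ x := Nat.floor_le hx

/-- With `r̃ := min {o : C(o+q,q) ≥ d̃}`, one has
`(q!·d̃)^{1/q} − q ≤ r̃ ≤ (q!·d̃)^{1/q}`. -/
theorem stmt2 (q dt : ℕ) (hq : 0 < q) (hdt : 0 < dt)
    (rt : ℕ) (hrt : rt = sInf {o : ℕ | dt ≤ (o + q).choose q}) :
    ((q.factorial * dt : ℝ) ^ ((1 : ℝ) / q) - q ≤ (rt : ℝ)) ∧
      ((rt : ℝ) ≤ (q.factorial * dt : ℝ) ^ ((1 : ℝ) / q)) :=
  stmt2_general q dt hq rt hrt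
end

section
/- Let K ∈ ℝ^{n×n} be a symmetric positive semidefinite matrix with eigenvalues λ_1 ≥ λ_2 ≥ ··· ≥ λ_n ≥ 0, let 0 < p ≤ 1, and let 1 ≤ s ≤ n. Then the maximum of Tr((PᵀKP)^{p/2}) over all matrices P ∈ ℝ^{n×s} with PᵀP = I_s equals λ_1^{p/2} + λ_2^{p/2} + ··· + λ_s^{p/2}, and this maximum is attained when the columns of P are eigenvectors of K corresponding to the s largest eigenvalues. -/
/-!
Cauchy interlacing does all the work. Diagonalize the compression `M = PᵀKP` as
`W diag(ν) Wᵀ` with `ν` decreasing. For each `k`, a dimension count gives a nonzero `y` in the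
span of the top `k + 1` eigenvectors of `M` such that `Py` is orthogonal to the top `k`
eigenvectors of `K`. Comparing the Rayleigh quotients of `M` at `y` and of `K` at `Py` gives
`ν_k ≤ λ_k`, and `t ↦ t^{p/2}` is monotone on `[0, ∞)`. Equality holds when the columns of `P`
are the top `s` eigenvectors of `K`, since then `PᵀKP = diag(λ₁, …, λ_s)`.
-/

open scoped Matrix

/-- `Tr(A^r)` for a symmetric PSD matrix, defined spectrally as the sum of the `r`-th
powers of the eigenvalues. -/
noncomputable def trRpow {n : ℕ} (A : Matrix (Fin n) (Fin n) ℝ) (r : ℝ) : ℝ :=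
  if h : A.IsHermitian then ∑ i, (h.eigenvalues i) ^ r else 0

open Matrix Polynomial

section Rayleigh

variable {ι : Type*} [Fintype ι] [DecidableEq ι] [LinearOrder ι] {w : ι → ℝ}

lemma mul_dotProduct_self_le_dotProduct_diagonal_mulVec (hw : Antitone w) {x : ι → ℝ} {k : ι}
    (hx : ∀ j, k < j → x j = 0) : w k * (x ⬝ᵥ x) ≤ x ⬝ᵥ (diagonal w *ᵥ x) := by
  simp only [dotProduct, mulVec_diagonal, Finset.mul_sum]
  refine Finset.sum_le_sum fun j _ => ?_
  rcases le_or_gt j k with hjk | hkj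
  · nlinarith [hw hjk, mul_self_nonneg (x j)]
  · simp [hx j hkj]

lemma dotProduct_diagonal_mulVec_le_mul_dotProduct_self (hw : Antitone w) {x : ι → ℝ} {k : ι}
    (hx : ∀ j, j < k → x j = 0) : x ⬝ᵥ (diagonal w *ᵥ x) ≤ w k * (x ⬝ᵥ x) := by
  simp only [dotProduct, mulVec_diagonal, Finset.mul_sum]
  refine Finset.sum_le_sum fun j _ => ?_
  rcases lt_or_ge j k with hjk | hkj
  · simp [hx j hjk]
  · nlinarith [hw hkj, mul_self_nonneg (x j)]

end Rayleigh

lemma exists_ne_zero_vanishing_above_mulVec_vanishing_below {m n : ℕ}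
    (Q : Matrix (Fin n) (Fin m) ℝ) (k : Fin m) :
    ∃ y : Fin m → ℝ, y ≠ 0 ∧ (∀ j, k < j → y j = 0) ∧
      ∀ i : Fin n, (i : ℕ) < k → (Q *ᵥ y) i = 0 := by
  let L : (Fin m → ℝ) →ₗ[ℝ] ({j // k < j} → ℝ) × ({i : Fin n // (i : ℕ) < k} → ℝ) :=
    (LinearMap.funLeft ℝ ℝ Subtype.val).prod
      (LinearMap.funLeft ℝ ℝ Subtype.val ∘ₗ Q.mulVecLin)
  have hcard : Fintype.card {j // k < j} + Fintype.card {i : Fin n // (i : ℕ) < k} < m := by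
    have h_above : Fintype.card {j // k < j} = m - 1 - k := by
      rw [Fintype.card_subtype, ← Fin.card_Ioi]; congr 1; ext; simp
    have h_below : Fintype.card {i : Fin n // (i : ℕ) < k} ≤ k :=
      (Fintype.card_le_of_injective (fun i => (⟨i.1, i.2⟩ : Fin k))
        fun a b h => Subtype.ext (Fin.ext (Fin.mk.inj h))).trans (Fintype.card_fin _).le
    have := k.isLt
    omega
  obtain ⟨y, hyL, hy0⟩ := Submodule.exists_mem_ne_zero_of_ne_bot
    (LinearMap.ker_ne_bot_of_finrank_lt (f := L) (by simpa [Module.finrank_prod] using hcard))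
  exact ⟨y, hy0, fun j hj => congrFun (congrArg Prod.fst hyL) ⟨j, hj⟩,
    fun i hi => congrFun (congrArg Prod.snd hyL) ⟨i, hi⟩⟩

lemma dotProduct_mulVec_transpose_mul_mul {m n : ℕ} (P : Matrix (Fin n) (Fin m) ℝ)
    (A : Matrix (Fin n) (Fin n) ℝ) (z : Fin m → ℝ) :
    z ⬝ᵥ ((Pᵀ * A * P) *ᵥ z) = (P *ᵥ z) ⬝ᵥ (A *ᵥ (P *ᵥ z)) := by
  rw [← mulVec_mulVec, ← mulVec_mulVec, dotProduct_mulVec, vecMul_transpose]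

lemma dotProduct_self_mulVec_of_transpose_mul_self {m n : ℕ} {P : Matrix (Fin n) (Fin m) ℝ}
    (hP : Pᵀ * P = 1) (x : Fin m → ℝ) : (P *ᵥ x) ⬝ᵥ (P *ᵥ x) = x ⬝ᵥ x := by
  simpa [hP] using (dotProduct_mulVec_transpose_mul_mul P 1 x).symm

lemma le_of_transpose_mul_diagonal_mul_eq_diagonal {m n : ℕ} (hmn : m ≤ n)
    {d : Fin n → ℝ} {e : Fin m → ℝ} (hd : Antitone d) (he : Antitone e)
    {Q : Matrix (Fin n) (Fin m) ℝ} (hQ : Qᵀ * Q = 1) (hQde : Qᵀ * diagonal d * Q = diagonal e)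
    (k : Fin m) : e k ≤ d (Fin.castLE hmn k) := by
  obtain ⟨y, hy0, hy_above, hQy_below⟩ := exists_ne_zero_vanishing_above_mulVec_vanishing_below Q k
  have hyy : 0 < y ⬝ᵥ y := by
    simpa using (dotProduct_self_star_pos_iff (v := y)).mpr hy0
  refine le_of_mul_le_mul_right ?_ hyy
  calc e k * (y ⬝ᵥ y) ≤ y ⬝ᵥ (diagonal e *ᵥ y) :=
        mul_dotProduct_self_le_dotProduct_diagonal_mulVec he hy_above
    _ = (Q *ᵥ y) ⬝ᵥ (diagonal d *ᵥ (Q *ᵥ y)) := by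
        rw [← hQde, dotProduct_mulVec_transpose_mul_mul]
    _ ≤ d (Fin.castLE hmn k) * ((Q *ᵥ y) ⬝ᵥ (Q *ᵥ y)) :=
        dotProduct_diagonal_mulVec_le_mul_dotProduct_self hd hQy_below
    _ = d (Fin.castLE hmn k) * (y ⬝ᵥ y) := by
        rw [dotProduct_self_mulVec_of_transpose_mul_self hQ]

lemma transpose_mul_self_mul_eq_one {l m n : ℕ} {A : Matrix (Fin l) (Fin m) ℝ}
    {B : Matrix (Fin m) (Fin n) ℝ} (hA : Aᵀ * A = 1) (hB : Bᵀ * B = 1) :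
    (A * B)ᵀ * (A * B) = 1 := by
  rw [transpose_mul, Matrix.mul_assoc, ← Matrix.mul_assoc Aᵀ, hA, Matrix.one_mul, hB]

lemma transpose_mul_conj_mul_cancel {m : ℕ} {U : Matrix (Fin m) (Fin m) ℝ} (hU : Uᵀ * U = 1)
    (D : Matrix (Fin m) (Fin m) ℝ) : Uᵀ * (U * D * Uᵀ) * U = D := by
  calc Uᵀ * (U * D * Uᵀ) * U = Uᵀ * U * D * (Uᵀ * U) := by simp only [Matrix.mul_assoc]
    _ = D := by rw [hU, Matrix.one_mul, Matrix.mul_one]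

lemma transpose_submatrix_mul_mul_submatrix {m n : ℕ} (V K : Matrix (Fin n) (Fin n) ℝ)
    (f : Fin m → Fin n) :
    (V.submatrix id f)ᵀ * K * V.submatrix id f = (Vᵀ * K * V).submatrix f f := by
  rw [transpose_submatrix, ← submatrix_id_id K, ← submatrix_mul _ _ _ _ _ Function.bijective_id,
    ← submatrix_mul _ _ _ _ _ Function.bijective_id, submatrix_id_id]

lemma exists_antitone_mul_diagonal_mul_transpose_eq {m : ℕ} {U : Matrix (Fin m) (Fin m) ℝ}
    (hU : Uᵀ * U = 1) (μ : Fin m → ℝ) :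
    ∃ (W : Matrix (Fin m) (Fin m) ℝ) (ν : Fin m → ℝ),
      Wᵀ * W = 1 ∧ U * diagonal μ * Uᵀ = W * diagonal ν * Wᵀ ∧ Antitone ν := by
  let τ : Equiv.Perm (Fin m) := Fin.revPerm.trans (Tuple.sort μ)
  refine ⟨U.submatrix id τ, μ ∘ τ, ?_, ?_, ?_⟩
  · rw [transpose_submatrix, ← submatrix_mul _ _ _ _ _ Function.bijective_id, hU,
      submatrix_one_equiv]
  · rw [transpose_submatrix, ← submatrix_diagonal_equiv, submatrix_mul_equiv,
      ← submatrix_mul _ _ _ _ _ τ.bijective, submatrix_id_id]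
  · exact fun a b hab => Tuple.monotone_sort μ (Fin.rev_le_rev.mpr hab)

lemma Matrix.IsHermitian.exists_antitone_diagonalization {m : ℕ} {A : Matrix (Fin m) (Fin m) ℝ}
    (hA : A.IsHermitian) :
    ∃ (W : Matrix (Fin m) (Fin m) ℝ) (ν : Fin m → ℝ),
      Wᵀ * W = 1 ∧ A = W * diagonal ν * Wᵀ ∧ Antitone ν := by
  have hU : (hA.eigenvectorUnitary : Matrix (Fin m) (Fin m) ℝ)ᵀ * hA.eigenvectorUnitary = 1 := by
    simpa [star_eq_conjTranspose, conjTranspose_eq_transpose_of_trivial] using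
      Unitary.coe_star_mul_self hA.eigenvectorUnitary
  have hspec := hA.spectral_theorem
  simp only [Unitary.conjStarAlgAut_apply, star_eq_conjTranspose,
    conjTranspose_eq_transpose_of_trivial] at hspec
  rw [hspec]
  exact exists_antitone_mul_diagonal_mul_transpose_eq hU _

lemma Multiset.map_univ_eq_of_prod_X_sub_C_eq {R ι : Type*} [CommRing R] [IsDomain R]
    [Fintype ι] {f g : ι → R} (h : ∏ i, (X - C (f i)) = ∏ i, (X - C (g i))) :
    Finset.univ.val.map f = Finset.univ.val.map g := by
  have hprod (u : ι → R) : ∏ i, (X - C (u i)) = ((Finset.univ.val.map u).map (X - C ·)).prod := by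
    rw [Finset.prod_eq_multiset_prod, Multiset.map_map]; rfl
  rw [← roots_multiset_prod_X_sub_C (Finset.univ.val.map f), ← hprod, h, hprod,
    roots_multiset_prod_X_sub_C]

lemma trRpow_mul_diagonal_mul_transpose {m : ℕ} {U : Matrix (Fin m) (Fin m) ℝ} (hU : Uᵀ * U = 1)
    (d : Fin m → ℝ) (r : ℝ) : trRpow (U * diagonal d * Uᵀ) r = ∑ i, d i ^ r := by
  have hH : (U * diagonal d * Uᵀ).IsHermitian := by
    simpa [conjTranspose_eq_transpose_of_trivial] using
      isHermitian_mul_mul_conjTranspose U (isHermitian_diagonal d)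
  have hchar : (U * diagonal d * Uᵀ).charpoly = (diagonal d).charpoly := by
    rw [mul_assoc, charpoly_mul_comm, mul_assoc, hU, mul_one]
  have hroots : Finset.univ.val.map hH.eigenvalues = Finset.univ.val.map d := by
    apply Multiset.map_univ_eq_of_prod_X_sub_C_eq
    simpa [charpoly_diagonal] using hH.charpoly_eq.symm.trans hchar
  rw [trRpow, dif_pos hH, Finset.sum_eq_multiset_sum, Finset.sum_eq_multiset_sum]
  simpa only [Multiset.map_map, Function.comp_def] using
    congrArg (fun s => (s.map (· ^ r)).sum) hroots

lemma trRpow_diagonal {m : ℕ} (d : Fin m → ℝ) (r : ℝ) :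
    trRpow (diagonal d) r = ∑ i, d i ^ r := by
  simpa using trRpow_mul_diagonal_mul_transpose (U := 1) (by simp) d r

lemma trRpow_transpose_mul_mul_le {n s : ℕ} (hsn : s ≤ n) {K V : Matrix (Fin n) (Fin n) ℝ}
    {lam : Fin n → ℝ} (hK : K.PosSemidef) (hV : Vᵀ * V = 1)
    (hVK : K = V * diagonal lam * Vᵀ) (hlam : Antitone lam) {P : Matrix (Fin n) (Fin s) ℝ}
    (hP : Pᵀ * P = 1) {r : ℝ} (hr : 0 ≤ r) :
    trRpow (Pᵀ * K * P) r ≤ ∑ i : Fin s, lam (Fin.castLE hsn i) ^ r := by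
  have hM : (Pᵀ * K * P).IsHermitian := by
    simpa [conjTranspose_eq_transpose_of_trivial] using isHermitian_conjTranspose_mul_mul P hK.1
  obtain ⟨W, ν, hW, hMW, hν⟩ := hM.exists_antitone_diagonalization
  have hνK : diagonal ν = (P * W)ᵀ * K * (P * W) := by
    rw [← transpose_mul_conj_mul_cancel hW (diagonal ν), ← hMW, transpose_mul]
    simp only [Matrix.mul_assoc]
  have hν_nonneg (i : Fin s) : 0 ≤ ν i := by
    have hPSD := hK.conjTranspose_mul_mul_same (P * W)
    rw [conjTranspose_eq_transpose_of_trivial, ← hνK] at hPSD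
    simpa using hPSD.diag_nonneg (i := i)
  have hQ : (Vᵀ * (P * W))ᵀ * (Vᵀ * (P * W)) = 1 :=
    transpose_mul_self_mul_eq_one (by rw [transpose_transpose, mul_eq_one_comm.mp hV])
      (transpose_mul_self_mul_eq_one hP hW)
  have hQν : (Vᵀ * (P * W))ᵀ * diagonal lam * (Vᵀ * (P * W)) = diagonal ν := by
    rw [hνK, hVK, transpose_mul, transpose_transpose]
    simp only [Matrix.mul_assoc]
  rw [hMW, trRpow_mul_diagonal_mul_transpose hW]
  exact Finset.sum_le_sum fun k _ => Real.rpow_le_rpow (hν_nonneg k)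
    (le_of_transpose_mul_diagonal_mul_eq_diagonal hsn hlam hν hQ hQν k) hr

theorem stmt3_general (n s : ℕ) (hsn : s ≤ n) (p : ℝ) (hp0 : 0 < p)
    (K : Matrix (Fin n) (Fin n) ℝ) (hK : K.PosSemidef)
    (V : Matrix (Fin n) (Fin n) ℝ) (lam : Fin n → ℝ)
    (hV : Vᵀ * V = 1) (hVK : K = V * Matrix.diagonal lam * Vᵀ)
    (hsort : Antitone lam) :
    IsGreatest
      {t : ℝ | ∃ P : Matrix (Fin n) (Fin s) ℝ, Pᵀ * P = 1 ∧ t = trRpow (Pᵀ * K * P) (p / 2)}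
      (∑ i : Fin s, lam (Fin.castLE hsn i) ^ (p / 2)) ∧
    trRpow ((V.submatrix id (Fin.castLE hsn))ᵀ * K * V.submatrix id (Fin.castLE hsn)) (p / 2)
      = ∑ i : Fin s, lam (Fin.castLE hsn i) ^ (p / 2) := by
  set P₀ := V.submatrix id (Fin.castLE hsn)
  have hP₀ : P₀ᵀ * P₀ = 1 := by
    have h := transpose_submatrix_mul_mul_submatrix V 1 (Fin.castLE hsn)
    rwa [Matrix.mul_one, Matrix.mul_one, hV, submatrix_one _ (Fin.castLE_injective hsn)] at h
  have hval : trRpow (P₀ᵀ * K * P₀) (p / 2) = ∑ i : Fin s, lam (Fin.castLE hsn i) ^ (p / 2) := by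
    rw [transpose_submatrix_mul_mul_submatrix, hVK, transpose_mul_conj_mul_cancel hV,
      submatrix_diagonal _ _ (Fin.castLE_injective hsn), trRpow_diagonal]
    rfl
  refine ⟨⟨⟨P₀, hP₀, hval.symm⟩, ?_⟩, hval⟩
  rintro t ⟨P, hP, rfl⟩
  exact trRpow_transpose_mul_mul_le hsn hK hV hVK hsort hP (by positivity)

/-- for symmetric PSD `K` with eigenvalues `λ₁ ≥ ⋯ ≥ λₙ ≥ 0`, `0 < p ≤ 1`
and `1 ≤ s ≤ n`, the maximum of `Tr((PᵀKP)^{p/2})` over `P` with `PᵀP = I_s` equals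
`λ₁^{p/2} + ⋯ + λ_s^{p/2}`, attained when the columns of `P` are eigenvectors of `K`
for the `s` largest eigenvalues. -/
theorem stmt3 (n s : ℕ) (hs1 : 1 ≤ s) (hsn : s ≤ n) (p : ℝ) (hp0 : 0 < p) (hp1 : p ≤ 1)
    (K : Matrix (Fin n) (Fin n) ℝ) (hK : K.PosSemidef)
    (V : Matrix (Fin n) (Fin n) ℝ) (lam : Fin n → ℝ)
    (hV : Vᵀ * V = 1) (hVK : K = V * Matrix.diagonal lam * Vᵀ)
    (hsort : Antitone lam) (hpos : ∀ i, 0 ≤ lam i) :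
    IsGreatest
      {t : ℝ | ∃ P : Matrix (Fin n) (Fin s) ℝ, Pᵀ * P = 1 ∧ t = trRpow (Pᵀ * K * P) (p / 2)}
      (∑ i : Fin s, lam (Fin.castLE hsn i) ^ (p / 2)) ∧
    trRpow ((V.submatrix id (Fin.castLE hsn))ᵀ * K * V.submatrix id (Fin.castLE hsn)) (p / 2)
      = ∑ i : Fin s, lam (Fin.castLE hsn i) ^ (p / 2) :=
  stmt3_general n s hsn p hp0 K hK V lam hV hVK hsort
end
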